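/- Let c ≤ d be rationals with d - c ∈ ℕ, and set S = {c + i : i ∈ ℕ, c + i ≤ d}. Let t ≤ d be rational and let s be the least element of {x ∈ S : x ≥ t}. Assume s - 1 < t. Let t' be a rational with t ≤ t' ≤ d, and let s' be the least element of {x ∈ S : x ≥ s and x ≥ t'} (equivalently, the least element of the sub-segment {s, s+1, …, d} that is ≥ t'). Then s' - 1 < t'. -/

import Mathlib

theorem splitting_point_inductive (c d : ℚ) (hcd : c ≤ d) (hint : ∃ n : ℕ, d - c = n)
    (S : Set ℚ) (hS : S = {x | ∃ i : ℕ, x = c + i ∧ x ≤ d})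
    (t : ℚ) (ht : t ≤ d)
    (s : ℚ) (hs : IsLeast {x ∈ S | t ≤ x} s) (hstrict : s - 1 < t)
    (t' : ℚ) (ht'1 : t ≤ t') (ht'2 : t' ≤ d)
    (s' : ℚ) (hs' : IsLeast {x ∈ S | s ≤ x ∧ t' ≤ x} s') :
    s' - 1 < t' := by
  obtain ⟨n, hn⟩ := hint
  obtain ⟨⟨hsS, hts⟩, -⟩ := hs
  rw [hS] at hsS
  obtain ⟨i, hi, hsd⟩ := hsS
  -- candidate element x = s + ⌈t' - s⌉₊
  set k : ℕ := ⌈t' - s⌉₊ with hk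
  set x : ℚ := s + k with hx
  have hsx : s ≤ x := by rw [hx]; have : (0:ℚ) ≤ k := Nat.cast_nonneg k; linarith
  have ht'x : t' ≤ x := by
    have := Nat.le_ceil (t' - s)
    linarith
  have hxlt : x < t' + 1 := by
    rcases le_or_gt t' s with h | h
    · have : k = 0 := by
        rw [hk]; exact_mod_cast Nat.ceil_eq_zero.mpr (by linarith)
      rw [hx, this]
      push_cast
      linarith
    · have := Nat.ceil_lt_add_one (le_of_lt (by linarith : (0:ℚ) < t' - s))
      rw [hx]
      linarith
  have hxd : x ≤ d := by
    have hdx : d = c + n := by linarith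
    have hxc : x = c + (i + k : ℕ) := by push_cast; rw [hx, hi]; ring
    have hlt : ((i + k : ℕ) : ℚ) < (n : ℚ) + 1 := by
      have : c + (i + k : ℕ) < c + n + 1 := by rw [← hxc, ← hdx]; linarith
      linarith
    have : (i + k : ℕ) ≤ n := by exact_mod_cast Nat.lt_add_one_iff.mp (by exact_mod_cast hlt)
    rw [hxc, hdx]
    have h : ((i + k : ℕ) : ℚ) ≤ n := by exact_mod_cast this
    linarith
  have hxS : x ∈ S := by
    rw [hS]
    exact ⟨i + k, by push_cast; rw [hx, hi]; ring, hxd⟩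
  have := hs'.2 ⟨hxS, hsx, ht'x⟩
  linarith
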